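/- Let c be real and let x > 0 satisfy the implicit equation x(e^x − 1)/(e^x − 1 − x) = 3c. Then F(c, 1/4, 1/4, 1/16, x, x, x) = 2(1−c)·ln 4. (At the point α = 1/4, r = 1/4, t = 1/16 one has y = z = x, and the function takes the value 2(1−c) ln 4.) -/
import Mathlib


/-- For `w > 0`, `Υ(w) = (w(e^w-1)/(e^w-1-w))·ln w - ln(e^w-1-w)`. -/
noncomputable def Upsilon (w : ℝ) : ℝ :=
  (w * (Real.exp w - 1) / (Real.exp w - 1 - w)) * Real.log w -
    Real.log (Real.exp w - 1 - w)

/-- The function `F(c, α, r, t, x, y, z)`. -/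
noncomputable def F (c α r t x y z : ℝ) : ℝ :=
  Real.log 4 - c * Real.log 4 + (1 - α) * Real.log 3
    - c * (2 + t - 3 * r) * Real.log 3
    + c * (1 - 3 * r + 2 * t) * Real.log 2
    - α * Real.log α - (1 - α) * Real.log (1 - α)
    - c * (1 - 3 * r + 2 * t) * Real.log (1 - 3 * r + 2 * t)
    - 3 * c * (r - t) * Real.log (r - t)
    - c * t * Real.log t
    + 3 * c * r * Real.log r + 3 * c * (1 - r) * Real.log (1 - r)
    + Upsilon x - α * Upsilon z - (1 - α) * Upsilon y

/-- At the point `α = 1/4`, `r = 1/4`, `t = 1/16` one has `y = z = x`, and the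
function `F` takes the value `2(1-c)·ln 4` there. -/
theorem F_value_at_critical_point (c x : ℝ) (hx : 0 < x)
    (heq : x * (Real.exp x - 1) / (Real.exp x - 1 - x) = 3 * c) :
    F c (1 / 4) (1 / 4) (1 / 16) x x x = 2 * (1 - c) * Real.log 4 := by
  have h4 : Real.log 4 = 2 * Real.log 2 := by
    rw [show (4:ℝ) = 2 ^ 2 by norm_num, Real.log_pow]; push_cast; ring
  have h14 : Real.log (1/4 : ℝ) = -(2 * Real.log 2) := by
    rw [Real.log_div one_ne_zero (by norm_num), Real.log_one, h4]; ring
  have h34 : Real.log (3/4 : ℝ) = Real.log 3 - 2 * Real.log 2 := by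
    rw [Real.log_div (by norm_num) (by norm_num), h4]
  have h38 : Real.log (3/8 : ℝ) = Real.log 3 - 3 * Real.log 2 := by
    rw [Real.log_div (by norm_num) (by norm_num),
      show (8:ℝ) = 2 ^ 3 by norm_num, Real.log_pow]; push_cast; ring
  have h316 : Real.log (3/16 : ℝ) = Real.log 3 - 4 * Real.log 2 := by
    rw [Real.log_div (by norm_num) (by norm_num),
      show (16:ℝ) = 2 ^ 4 by norm_num, Real.log_pow]; push_cast; ring
  have h116 : Real.log (1/16 : ℝ) = -(4 * Real.log 2) := by
    rw [Real.log_div one_ne_zero (by norm_num), Real.log_one,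
      show (16:ℝ) = 2 ^ 4 by norm_num, Real.log_pow]; push_cast; ring
  simp only [F]
  norm_num [h4, h14, h34, h38, h316, h116]
  ring
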